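/- Let u : [-1,1] → ℝ be C¹ with mean value M/2 over (-1,1) and ∫_{-1}^{1} (1-x²) u'(x)² dx ≤ C₀. Then for every β > 0 there is a constant C₁ (depending only on β and C₀) such that (1-x²)^{β/2} |u(x) - M/2| ≤ C₁ for all x ∈ (-1,1). -/

import Mathlib

/-!
Between two points y ≤ x of (-1, 1), integrating the AM–GM bound
|u'| ≤ ((1 - t²) u'² + (1 - t²)⁻¹) / 2 gives |u x - u y| ≤ (E + |artanh x - artanh y|) / 2,
where E is the weighted energy, because artanh' = (1 - t²)⁻¹. Since artanh is integrable on
(-1, 1), averaging over y bounds |u x - M / 2| by (E + |artanh x|) / 2 plus a constant. Finally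
|artanh x| ≤ 1 - log (1 - x²) / 2 grows only logarithmically, and s ^ t |log s| < 1 / t on (0, 1]
lets the weight (1 - x²) ^ (β / 2) absorb it.
-/

open MeasureTheory Set

namespace Real

theorem artanh_eq_log_sub_log {x : ℝ} (hx : x ∈ Ioo (-1) 1) :
    artanh x = (log (1 + x) - log (1 - x)) / 2 := by
  rw [artanh_eq_half_log (Ioo_subset_Icc_self hx),
    log_div (by linarith [hx.1]) (by linarith [hx.2])]
  ring

theorem hasDerivAt_artanh {x : ℝ} (hx : x ∈ Ioo (-1) 1) :
    HasDerivAt artanh (1 - x ^ 2)⁻¹ x := by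
  have hp : 1 + x ≠ 0 := by linarith [hx.1]
  have hm : 1 - x ≠ 0 := by linarith [hx.2]
  have hs : 1 - x ^ 2 ≠ 0 := by nlinarith [hx.1, hx.2]
  have hlog := ((((hasDerivAt_id x).const_add 1).log hp).sub
    (((hasDerivAt_id x).const_sub 1).log hm)).div_const 2
  refine (hlog.congr_of_eventuallyEq ?_).congr_deriv ?_
  · filter_upwards [isOpen_Ioo.mem_nhds hx] with t ht using artanh_eq_log_sub_log ht
  · simp only [id]
    field_simp
    ring

theorem abs_artanh_le {x : ℝ} (hx : x ∈ Ioo (-1) 1) :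
    |artanh x| ≤ 1 - log (1 - x ^ 2) / 2 := by
  have hp : 0 < 1 + x := by linarith [hx.1]
  have hm : 0 < 1 - x := by linarith [hx.2]
  have hsplit : log (1 - x ^ 2) = log (1 + x) + log (1 - x) := by
    rw [← log_mul hp.ne' hm.ne']; ring_nf
  rw [artanh_eq_log_sub_log hx, abs_le]
  constructor <;> linarith [log_le_sub_one_of_pos hp, log_le_sub_one_of_pos hm, hx.1, hx.2]

theorem rpow_mul_abs_artanh_le {t x : ℝ} (ht : 0 < t) (hx : x ∈ Ioo (-1) 1) :
    (1 - x ^ 2) ^ t * |artanh x| ≤ 1 + 1 / (2 * t) := by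
  have hs : 0 < 1 - x ^ 2 := by nlinarith [hx.1, hx.2]
  have hs₁ : 1 - x ^ 2 ≤ 1 := by nlinarith
  have hw₀ : 0 ≤ (1 - x ^ 2) ^ t := rpow_nonneg hs.le t
  have hw₁ : (1 - x ^ 2) ^ t ≤ 1 := rpow_le_one hs.le hs₁ ht.le
  have hlog := (abs_lt.mp (abs_log_mul_self_rpow_lt _ t hs hs₁ ht)).1
  calc (1 - x ^ 2) ^ t * |artanh x|
      ≤ (1 - x ^ 2) ^ t * (1 - log (1 - x ^ 2) / 2) := by gcongr; exact abs_artanh_le hx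
    _ = (1 - x ^ 2) ^ t - log (1 - x ^ 2) * (1 - x ^ 2) ^ t / 2 := by ring
    _ ≤ 1 + 1 / (2 * t) := by
        have : 1 / (2 * t) = 1 / t / 2 := by field_simp
        linarith

theorem intervalIntegrable_artanh : IntervalIntegrable artanh volume (-1) 1 := by
  have hlog : IntervalIntegrable (fun x ↦ (log (1 + x) - log (1 - x)) / 2) volume (-1) 1 := by
    have h₁ := (intervalIntegral.intervalIntegrable_log' (a := 0) (b := 2)).comp_add_left 1
    have h₂ := (intervalIntegral.intervalIntegrable_log' (a := 2) (b := 0)).comp_sub_left 1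
    norm_num at h₁ h₂
    exact (h₁.sub h₂).div_const 2
  refine hlog.congr_uIoo fun x hx ↦ (artanh_eq_log_sub_log ?_).symm
  rwa [uIoo_of_le (by norm_num)] at hx

end Real

theorem abs_le_mul_sq_add_inv_div_two {w : ℝ} (hw : 0 < w) (z : ℝ) :
    |z| ≤ (w * z ^ 2 + w⁻¹) / 2 := by
  rw [← sq_abs z]
  field_simp
  nlinarith [sq_nonneg (w * |z| - 1)]

theorem abs_sub_le_weighted_energy_add_integral_inv {u u' w : ℝ → ℝ} {a b : ℝ} (hab : a ≤ b)
    (hu : ∀ t ∈ Icc a b, HasDerivAt u (u' t) t) (hu' : ContinuousOn u' (Icc a b))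
    (hw : ContinuousOn w (Icc a b)) (hw₀ : ∀ t ∈ Icc a b, 0 < w t) :
    |u b - u a| ≤ ((∫ t in a..b, w t * u' t ^ 2) + ∫ t in a..b, (w t)⁻¹) / 2 := by
  have hu'_int : IntervalIntegrable u' volume a b := hu'.intervalIntegrable_of_Icc hab
  have henergy_int : IntervalIntegrable (fun t ↦ w t * u' t ^ 2) volume a b :=
    (hw.mul (hu'.pow 2)).intervalIntegrable_of_Icc hab
  have hinv_int : IntervalIntegrable (fun t ↦ (w t)⁻¹) volume a b :=
    (hw.inv₀ fun t ht ↦ (hw₀ t ht).ne').intervalIntegrable_of_Icc hab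
  rw [← intervalIntegral.integral_eq_sub_of_hasDerivAt
    (fun t ht ↦ hu t (uIcc_of_le hab ▸ ht)) hu'_int]
  calc |∫ t in a..b, u' t|
      ≤ ∫ t in a..b, |u' t| := intervalIntegral.abs_integral_le_integral_abs hab
    _ ≤ ∫ t in a..b, (w t * u' t ^ 2 + (w t)⁻¹) / 2 :=
        intervalIntegral.integral_mono_on hab hu'_int.abs
          ((henergy_int.add hinv_int).div_const 2)
          fun t ht ↦ abs_le_mul_sq_add_inv_div_two (hw₀ t ht) (u' t)
    _ = ((∫ t in a..b, w t * u' t ^ 2) + ∫ t in a..b, (w t)⁻¹) / 2 := by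
        rw [intervalIntegral.integral_div, intervalIntegral.integral_add henergy_int hinv_int]

theorem abs_sub_integral_div_le {u : ℝ → ℝ} {a b : ℝ} (hab : a < b)
    (hu : IntervalIntegrable u volume a b) (c : ℝ) :
    |c - (∫ y in a..b, u y) / (b - a)| ≤ (∫ y in a..b, |c - u y|) / (b - a) := by
  have hba : 0 < b - a := sub_pos.mpr hab
  have hmean : c - (∫ y in a..b, u y) / (b - a) = (∫ y in a..b, (c - u y)) / (b - a) := by
    rw [intervalIntegral.integral_sub intervalIntegrable_const hu, intervalIntegral.integral_const,
      smul_eq_mul]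
    field_simp
  rw [hmean, abs_div, abs_of_pos hba]
  gcongr
  exact intervalIntegral.abs_integral_le_integral_abs hab.le

namespace ContDiffOn

variable {u : ℝ → ℝ} {a b : ℝ}

theorem hasDerivAt_of_mem_Ioo (hu : ContDiffOn ℝ 1 u (Icc a b)) {t : ℝ} (ht : t ∈ Ioo a b) :
    HasDerivAt u (deriv u t) t :=
  ((hu.differentiableOn one_ne_zero t (Ioo_subset_Icc_self ht)).differentiableAt
    (Icc_mem_nhds ht.1 ht.2)).hasDerivAt

theorem continuousOn_deriv_Ioo (hu : ContDiffOn ℝ 1 u (Icc a b)) :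
    ContinuousOn (deriv u) (Ioo a b) :=
  (hu.mono Ioo_subset_Icc_self).continuousOn_deriv_of_isOpen isOpen_Ioo le_rfl

theorem intervalIntegrable_mul_deriv_sq {w : ℝ → ℝ} (hab : a < b)
    (hu : ContDiffOn ℝ 1 u (Icc a b)) (hw : ContinuousOn w (Icc a b)) :
    IntervalIntegrable (fun t ↦ w t * deriv u t ^ 2) volume a b := by
  have hderivWithin : ContinuousOn (derivWithin u (Icc a b)) (Icc a b) :=
    hu.continuousOn_derivWithin (uniqueDiffOn_Icc hab) le_rfl
  refine ((hw.mul (hderivWithin.pow 2)).intervalIntegrable_of_Icc hab.le).congr_uIoo ?_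
  intro t ht
  rw [uIoo_of_le hab.le] at ht
  simp only [Pi.mul_apply, Pi.pow_apply, derivWithin_of_mem_nhds (Icc_mem_nhds ht.1 ht.2)]

end ContDiffOn

open Real

section WeightedEnergy

variable {u : ℝ → ℝ} {x : ℝ}

theorem abs_sub_le_energy_add_abs_artanh_sub (hu : ContDiffOn ℝ 1 u (Icc (-1) 1))
    (hx : x ∈ Ioo (-1) 1) {y : ℝ} (hy : y ∈ Ioo (-1) 1) :
    |u x - u y| ≤
      ((∫ t in (-1:ℝ)..1, (1 - t ^ 2) * deriv u t ^ 2) + |artanh x - artanh y|) / 2 := by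
  wlog hyx : y ≤ x generalizing x y
  · rw [abs_sub_comm, abs_sub_comm (artanh x)]
    exact this hy hx (le_of_not_ge hyx)
  have hsub : Icc y x ⊆ Ioo (-1) 1 := Icc_subset_Ioo hy.1 hx.2
  have hweight_pos : ∀ t ∈ Icc y x, 0 < 1 - t ^ 2 := fun t ht ↦ by
    nlinarith [(hsub ht).1, (hsub ht).2]
  have hosc := abs_sub_le_weighted_energy_add_integral_inv hyx
    (fun t ht ↦ hu.hasDerivAt_of_mem_Ioo (hsub ht)) (hu.continuousOn_deriv_Ioo.mono hsub)
    (by fun_prop) hweight_pos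
  have henergy : (∫ t in y..x, (1 - t ^ 2) * deriv u t ^ 2) ≤
      ∫ t in (-1:ℝ)..1, (1 - t ^ 2) * deriv u t ^ 2 := by
    refine intervalIntegral.integral_mono_interval hy.1.le hyx hx.2.le ?_
      (hu.intervalIntegrable_mul_deriv_sq (by norm_num) (by fun_prop))
    refine (ae_restrict_mem measurableSet_Ioc).mono fun t ht ↦ ?_
    have : 0 ≤ 1 - t ^ 2 := by nlinarith [ht.1, ht.2]
    positivity
  have hartanh : (∫ t in y..x, (1 - t ^ 2)⁻¹) = artanh x - artanh y := by
    refine intervalIntegral.integral_eq_sub_of_hasDerivAt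
      (fun t ht ↦ hasDerivAt_artanh (hsub (uIcc_of_le hyx ▸ ht))) ?_
    refine ContinuousOn.intervalIntegrable_of_Icc hyx ?_
    exact ContinuousOn.inv₀ (by fun_prop) fun t ht ↦ (hweight_pos t ht).ne'
  linarith [le_abs_self (artanh x - artanh y)]

theorem integral_abs_sub_le_energy_add (hu : ContDiffOn ℝ 1 u (Icc (-1) 1))
    (hx : x ∈ Ioo (-1) 1) :
    (∫ y in (-1:ℝ)..1, |u x - u y|) ≤
      (∫ t in (-1:ℝ)..1, (1 - t ^ 2) * deriv u t ^ 2) + |artanh x| +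
        (∫ y in (-1:ℝ)..1, |artanh y|) / 2 := by
  set E := ∫ t in (-1:ℝ)..1, (1 - t ^ 2) * deriv u t ^ 2
  have hartanh_int : IntervalIntegrable (fun y ↦ |artanh y|) volume (-1) 1 :=
    intervalIntegrable_artanh.abs
  calc (∫ y in (-1:ℝ)..1, |u x - u y|)
      ≤ ∫ y in (-1:ℝ)..1, ((E + |artanh x|) / 2 + |artanh y| / 2) := by
        refine intervalIntegral.integral_mono_on_of_le_Ioo (by norm_num) ?_
          (intervalIntegrable_const.add (hartanh_int.div_const 2)) fun y hy ↦ ?_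
        · exact ((continuousOn_const.sub hu.continuousOn).abs).intervalIntegrable_of_Icc
            (by norm_num)
        · linarith [abs_sub_le_energy_add_abs_artanh_sub hu hx hy,
            abs_sub (artanh x) (artanh y)]
    _ = E + |artanh x| + (∫ y in (-1:ℝ)..1, |artanh y|) / 2 := by
        rw [intervalIntegral.integral_add intervalIntegrable_const (hartanh_int.div_const 2),
          intervalIntegral.integral_const, intervalIntegral.integral_div]
        norm_num
        ring

end WeightedEnergy

/-- Uniform weighted L^∞ bound from the weighted Dirichlet energy bound. -/
theorem weighted_Linfty_bound (β C₀ : ℝ) (hβ : 0 < β) :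
    ∃ C₁ : ℝ, ∀ (u : ℝ → ℝ) (M : ℝ),
      ContDiffOn ℝ 1 u (Set.Icc (-1) 1) →
      (∫ x in (-1:ℝ)..1, u x) = M →
      (∫ x in (-1:ℝ)..1, (1 - x^2) * (deriv u x)^2) ≤ C₀ →
      ∀ x ∈ Set.Ioo (-1:ℝ) 1, (1 - x^2) ^ (β/2) * |u x - M / 2| ≤ C₁ := by
  set I := ∫ y in (-1:ℝ)..1, |artanh y|
  refine ⟨C₀ / 2 + I / 4 + (1 + 1 / β) / 2, ?_⟩
  rintro u M hu rfl hE x hx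
  set E := ∫ t in (-1:ℝ)..1, (1 - t ^ 2) * deriv u t ^ 2
  have hE₀ : 0 ≤ E := intervalIntegral.integral_nonneg (by norm_num) fun t ht ↦
    mul_nonneg (by nlinarith [ht.1, ht.2]) (sq_nonneg _)
  have hI₀ : 0 ≤ I := intervalIntegral.integral_nonneg (by norm_num) fun _ _ ↦ abs_nonneg _
  have hmean : |u x - (∫ y in (-1:ℝ)..1, u y) / 2| ≤ (∫ y in (-1:ℝ)..1, |u x - u y|) / 2 := by
    have := abs_sub_integral_div_le (by norm_num)
      (hu.continuousOn.intervalIntegrable_of_Icc (by norm_num)) (u x)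
    norm_num at this
    exact this
  have hosc := integral_abs_sub_le_energy_add hu hx
  have hs : 0 < 1 - x ^ 2 := by nlinarith [hx.1, hx.2]
  have hw₀ : 0 ≤ (1 - x ^ 2) ^ (β / 2) := rpow_nonneg hs.le _
  have hw₁ : (1 - x ^ 2) ^ (β / 2) ≤ 1 := rpow_le_one hs.le (by nlinarith) (by positivity)
  have hweight := rpow_mul_abs_artanh_le (half_pos hβ) hx
  rw [mul_div_cancel₀ _ two_ne_zero] at hweight
  calc (1 - x ^ 2) ^ (β / 2) * |u x - (∫ y in (-1:ℝ)..1, u y) / 2|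
      ≤ (1 - x ^ 2) ^ (β / 2) * ((E / 2 + I / 4) + |artanh x| / 2) := by
        gcongr; linarith
    _ ≤ 1 * (E / 2 + I / 4) + (1 + 1 / β) / 2 := by
        rw [mul_add, mul_div_assoc']
        gcongr
    _ ≤ C₀ / 2 + I / 4 + (1 + 1 / β) / 2 := by linarith
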